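/- Let σ = (Z,P) and τ = (W,Q) be stability conditions on a triangulated category D, and define their slicing distance d(P,Q) = sup over all nonzero objects E of D of max( |φ⁺_σ(E) − φ⁺_τ(E)| , |φ⁻_σ(E) − φ⁻_τ(E)| ). Then |gldim σ − gldim τ| ≤ 2·d(P,Q) (as an inequality in the extended reals [0,∞]). In particular, the global dimension function gldim is continuous on the space of stability conditions equipped with Bridgeland's metric. -/

import Mathlib

open CategoryTheory CategoryTheory.Limits CategoryTheory.Pretriangulated

universe v u

variable (D : Type u) [Category.{v} D] [Preadditive D] [HasZeroObject D]
  [HasShift D ℤ] [∀ n : ℤ, (shiftFunctor D n).Additive] [Pretriangulated D]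

/-- A slicing on a triangulated category (Bridgeland). -/
structure Slicing where
  P : ℝ → Set D
  iso_closed : ∀ {φ : ℝ} {X Y : D}, X ∈ P φ → Nonempty (X ≅ Y) → Y ∈ P φ
  zero_mem : ∀ (φ : ℝ) (X : D), IsZero X → X ∈ P φ
  shift_iff : ∀ (φ : ℝ) (X : D), X ∈ P φ ↔ X⟦(1 : ℤ)⟧ ∈ P (φ + 1)
  hom_orthogonal : ∀ {φ₁ φ₂ : ℝ} {A B : D}, φ₂ < φ₁ → A ∈ P φ₁ → B ∈ P φ₂ →
    ∀ f : A ⟶ B, f = 0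
  HN : ∀ E : D, ¬ IsZero E →
    ∃ (l : ℕ) (obj : Fin (l + 1) → D) (φ : Fin l → ℝ),
      StrictAnti φ ∧ IsZero (obj 0) ∧ Nonempty (obj (Fin.last l) ≅ E) ∧
      ∀ i : Fin l, ∃ A : D, A ∈ P (φ i) ∧ ¬ IsZero A ∧
        ∃ (f : obj i.castSucc ⟶ obj i.succ) (g : obj i.succ ⟶ A)
          (h : A ⟶ (obj i.castSucc)⟦(1 : ℤ)⟧),
          Triangle.mk f g h ∈ distTriang D

/-- A Bridgeland stability condition: a central charge (additive on distinguished
triangles) together with a compatible slicing. -/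
structure StabilityCondition extends Slicing D where
  Z : D → ℂ
  additive : ∀ T : Triangle D, T ∈ (distTriang D) → Z T.obj₂ = Z T.obj₁ + Z T.obj₃
  positivity : ∀ {φ : ℝ} {E : D}, E ∈ P φ → ¬ IsZero E →
    ∃ m : ℝ, 0 < m ∧ Z E = (m : ℂ) * Complex.exp (Real.pi * φ * Complex.I)

/-- The global dimension of a stability condition. -/
noncomputable def gldim (σ : StabilityCondition D) : EReal :=
  sSup { x : EReal | ∃ (φ₁ φ₂ : ℝ) (A B : D), A ∈ σ.P φ₁ ∧ B ∈ σ.P φ₂ ∧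
    ¬ IsZero A ∧ ¬ IsZero B ∧ (∃ f : A ⟶ B, f ≠ 0) ∧ x = ((φ₂ - φ₁ : ℝ) : EReal) }

/-- `φp` and `φm` are top/bottom Harder–Narasimhan phase functions for the stability
condition `σ`: every nonzero object admits an HN filtration with nonzero semistable
factors of strictly decreasing phases, whose first phase is `φp E` and last is `φm E`. -/
def IsHNPhases (σ : StabilityCondition D) (φp φm : D → ℝ) : Prop :=
  ∀ E : D, ¬ IsZero E →
    ∃ (l : ℕ) (obj : Fin (l + 2) → D) (φ : Fin (l + 1) → ℝ),
      StrictAnti φ ∧ IsZero (obj 0) ∧ Nonempty (obj (Fin.last (l + 1)) ≅ E) ∧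
      φp E = φ 0 ∧ φm E = φ (Fin.last l) ∧
      ∀ i : Fin (l + 1), ∃ A : D, A ∈ σ.P (φ i) ∧ ¬ IsZero A ∧
        ∃ (f : obj i.castSucc ⟶ obj i.succ) (g : obj i.succ ⟶ A)
          (h : A ⟶ (obj i.castSucc)⟦(1 : ℤ)⟧),
          Triangle.mk f g h ∈ distTriang D

/-!
A nonzero morphism `A → B` between `σ`-semistable objects of phases `φ₁`, `φ₂` restricts, by
the long exact Hom sequences of the `τ`-Harder–Narasimhan towers of `A` and `B`, to a nonzero
morphism between some `τ`-semistable factors, of phases `ψ ≤ φ⁺_τ(A)` and `ψ' ≥ φ⁻_τ(B)`.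
Since `φ⁺_σ(A) ≤ φ₁` and `φ₂ ≤ φ⁻_σ(B)`, this gives
`φ₂ - φ₁ ≤ (ψ' - ψ) + (φ⁺_τ(A) - φ⁺_σ(A)) + (φ⁻_σ(B) - φ⁻_τ(B)) ≤ gldim τ + 2 d`.
-/

lemma EReal.two_mul (x : EReal) : 2 * x = x + x := by
  induction x using EReal.rec with
  | bot => rw [EReal.mul_bot_of_pos (by norm_num)]; simp
  | coe x => rw [show (2 : EReal) = ((2 : ℝ) : EReal) by norm_cast, ← EReal.coe_mul,
      ← EReal.coe_add, EReal.coe_eq_coe_iff]; ring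
  | top => rw [EReal.mul_top_of_pos (by norm_num)]; simp

structure Tower (n : ℕ) where
  obj : Fin (n + 1) → D
  factor : Fin n → D
  f : ∀ i : Fin n, obj i.castSucc ⟶ obj i.succ
  g : ∀ i : Fin n, obj i.succ ⟶ factor i
  h : ∀ i : Fin n, factor i ⟶ (obj i.castSucc)⟦(1 : ℤ)⟧
  distinguished : ∀ i : Fin n, Triangle.mk (f i) (g i) (h i) ∈ distTriang D

section

variable {D}

namespace Tower

variable {n : ℕ} (T : Tower D n)

lemma hom_from_obj_eq_zero (h₀ : IsZero (T.obj 0)) {Y : D}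
    (hY : ∀ i (v : T.factor i ⟶ Y), v = 0) : ∀ j (u : T.obj j ⟶ Y), u = 0 := by
  refine Fin.induction (motive := fun j => ∀ u : T.obj j ⟶ Y, u = 0)
    (fun u => h₀.eq_of_src u 0) fun i ih u => ?_
  obtain ⟨v, rfl⟩ := Triangle.yoneda_exact₂ _ (T.distinguished i) u (ih _)
  rw [hY i v]; exact comp_zero

lemma hom_to_obj_eq_zero (h₀ : IsZero (T.obj 0)) {X : D}
    (hX : ∀ i (v : X ⟶ T.factor i), v = 0) : ∀ j (u : X ⟶ T.obj j), u = 0 := by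
  refine Fin.induction (motive := fun j => ∀ u : X ⟶ T.obj j, u = 0)
    (fun u => h₀.eq_of_tgt u 0) fun i ih u => ?_
  obtain ⟨v, rfl⟩ := Triangle.coyoneda_exact₂ _ (T.distinguished i) u (hX i _)
  rw [ih v]; exact zero_comp

lemma hom_to_obj_eq_zero_of_last {X : D}
    (hX : ∀ i (v : X ⟶ (T.factor i)⟦(-1 : ℤ)⟧), v = 0)
    (hlast : ∀ u : X ⟶ T.obj (Fin.last n), u = 0) : ∀ j (u : X ⟶ T.obj j), u = 0 := by
  refine Fin.reverseInduction (motive := fun j => ∀ u : X ⟶ T.obj j, u = 0) hlast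
    fun i ih u => ?_
  obtain ⟨v, rfl⟩ := Triangle.coyoneda_exact₂ _
    (inv_rot_of_distTriang _ (T.distinguished i)) u (ih _)
  rw [hX i v]; exact zero_comp

lemma exists_factor_hom_ne_zero {m : ℕ} (S : Tower D m) (hT : IsZero (T.obj 0))
    (hS : IsZero (S.obj 0)) {A B : D} (eA : T.obj (Fin.last n) ≅ A)
    (eB : S.obj (Fin.last m) ≅ B) {u : A ⟶ B} (hu : u ≠ 0) :
    ∃ i j, ∃ w : T.factor i ⟶ S.factor j, w ≠ 0 := by
  by_contra! hw
  have hB : ∀ i (v : T.factor i ⟶ B), v = 0 := fun i v =>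
    (cancel_mono eB.inv).1 <| by rw [S.hom_to_obj_eq_zero hS (hw i) _ (v ≫ eB.inv), zero_comp]
  exact hu <| (cancel_epi eA.hom).1 <| by
    rw [T.hom_from_obj_eq_zero hT hB _ (eA.hom ≫ u), comp_zero]

end Tower

lemma Slicing.shift_neg_one_mem (P : Slicing D) {φ : ℝ} {X : D} (hX : X ∈ P.P φ) :
    X⟦(-1 : ℤ)⟧ ∈ P.P (φ - 1) := by
  rw [P.shift_iff, sub_add_cancel]
  exact P.iso_closed hX ⟨((shiftEquiv D (1 : ℤ)).counitIso.app X).symm⟩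

omit [HasZeroObject D] [Pretriangulated D] in
lemma hom_shift_one_eq_zero {X Y : D} (hXY : ∀ v : X ⟶ Y⟦(-1 : ℤ)⟧, v = 0)
    (r : X⟦(1 : ℤ)⟧ ⟶ Y) : r = 0 := by
  refine (shiftFunctor D (-1 : ℤ)).map_injective ?_
  rw [Functor.map_zero]
  refine (cancel_epi ((shiftFunctorCompIsoId D (1 : ℤ) (-1) (by norm_num)).inv.app X)).1 ?_
  rw [hXY (_ ≫ _), comp_zero]

namespace IsHNPhases

variable {σ : StabilityCondition D} {φp φm : D → ℝ}

lemma exists_tower (hσ : IsHNPhases D σ φp φm) {E : D} (hE : ¬ IsZero E) :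
    ∃ (l : ℕ) (T : Tower D (l + 1)) (ψ : Fin (l + 1) → ℝ), StrictAnti ψ ∧ IsZero (T.obj 0) ∧
      Nonempty (T.obj (Fin.last (l + 1)) ≅ E) ∧ φp E = ψ 0 ∧ φm E = ψ (Fin.last l) ∧
      ∀ i, T.factor i ∈ σ.P (ψ i) ∧ ¬ IsZero (T.factor i) := by
  obtain ⟨l, obj, ψ, hψ, h₀, e, hp, hm, hF⟩ := hσ E hE
  choose F hFmem hF0 f g h htri using hF
  exact ⟨l, ⟨obj, F, f, g, h, htri⟩, ψ, hψ, h₀, e, hp, hm, fun i => ⟨hFmem i, hF0 i⟩⟩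

/-- If `φ < ψ 0`, then `obj 1 ≅ factor 0` has no maps to any `factor i⟦-1⟧` nor to `A`, so its
identity vanishes. -/
lemma top_le_of_mem (hσ : IsHNPhases D σ φp φm) {φ : ℝ} {A : D} (hA : A ∈ σ.P φ)
    (hA0 : ¬ IsZero A) : φp A ≤ φ := by
  obtain ⟨l, T, ψ, hψ, h₀, ⟨e⟩, htop, -, hF⟩ := hσ.exists_tower hA0
  rw [htop]
  by_contra! hlt
  have : IsIso (T.g 0) := (Triangle.isZero₁_iff_isIso₂ _ (T.distinguished 0)).1 <| by
    rw [Triangle.mk_obj₁, Fin.castSucc_zero]; exact h₀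
  have hXmem : T.obj (0 : Fin (l + 1)).succ ∈ σ.P (ψ 0) :=
    σ.iso_closed (hF 0).1 ⟨(asIso (T.g 0)).symm⟩
  have hX : ∀ i (v : T.obj (0 : Fin (l + 1)).succ ⟶ (T.factor i)⟦(-1 : ℤ)⟧), v = 0 :=
    fun i v => σ.hom_orthogonal (by linarith [hψ.antitone (Fin.zero_le i)]) hXmem
      (σ.shift_neg_one_mem (hF i).1) v
  have hlast : ∀ u : T.obj (0 : Fin (l + 1)).succ ⟶ T.obj (Fin.last (l + 1)), u = 0 :=
    fun u => (cancel_mono e.hom).1 <| by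
      rw [σ.hom_orthogonal hlt hXmem hA (u ≫ e.hom), zero_comp]
  refine (hF 0).2 (IsZero.of_iso ?_ (asIso (T.g 0)).symm)
  exact (IsZero.iff_id_eq_zero _).2 (T.hom_to_obj_eq_zero_of_last hX hlast _ _)

/-- If `ψ l < φ`, the last map `obj (l + 1) ≅ A → factor l` vanishes, so the identity of
`factor l` factors through `obj l⟦1⟧`, which has no maps to it. -/
lemma le_bot_of_mem (hσ : IsHNPhases D σ φp φm) {φ : ℝ} {A : D} (hA : A ∈ σ.P φ)
    (hA0 : ¬ IsZero A) : φ ≤ φm A := by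
  obtain ⟨l, T, ψ, hψ, h₀, ⟨e⟩, -, hbot, hF⟩ := hσ.exists_tower hA0
  rw [hbot]
  by_contra! hlt
  have hg : T.g (Fin.last l) = 0 :=
    σ.hom_orthogonal hlt (σ.iso_closed hA ⟨e.symm⟩) (hF _).1 _
  obtain ⟨r, hr⟩ := Triangle.yoneda_exact₂ _ (rot_of_distTriang _ (T.distinguished _))
    (𝟙 (T.factor (Fin.last l))) ((Category.comp_id _).trans hg)
  have hr0 : r = 0 := hom_shift_one_eq_zero (T.hom_from_obj_eq_zero h₀
    (fun j v => σ.hom_orthogonal (by linarith [hψ.antitone (Fin.le_last j)]) (hF j).1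
      (σ.shift_neg_one_mem (hF _).1) v) _) r
  refine (hF (Fin.last l)).2 ((IsZero.iff_id_eq_zero _).2 ?_)
  rw [hr, hr0]; exact comp_zero

end IsHNPhases

lemma gldim_le_gldim_add_add {σ τ : StabilityCondition D} {σp σm τp τm : D → ℝ}
    (hσ : IsHNPhases D σ σp σm) (hτ : IsHNPhases D τ τp τm) {d₁ d₂ : EReal}
    (htop : ∀ E : D, ¬ IsZero E → ((τp E - σp E : ℝ) : EReal) ≤ d₁)
    (hbot : ∀ E : D, ¬ IsZero E → ((σm E - τm E : ℝ) : EReal) ≤ d₂) :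
    gldim D σ ≤ gldim D τ + d₁ + d₂ := by
  refine sSup_le ?_
  rintro _ ⟨φ₁, φ₂, A, B, hA, hB, hA0, hB0, ⟨u, hu⟩, rfl⟩
  obtain ⟨lA, TA, ψA, hψA, hA₀, ⟨eA⟩, hpA, -, hFA⟩ := hτ.exists_tower hA0
  obtain ⟨lB, TB, ψB, hψB, hB₀, ⟨eB⟩, -, hmB, hFB⟩ := hτ.exists_tower hB0
  obtain ⟨i, j, w, hw⟩ := TA.exists_factor_hom_ne_zero TB hA₀ hB₀ eA eB hu
  have hfactors : ((ψB j - ψA i : ℝ) : EReal) ≤ gldim D τ :=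
    le_sSup ⟨ψA i, ψB j, _, _, (hFA i).1, (hFB j).1, (hFA i).2, (hFB j).2, ⟨w, hw⟩, rfl⟩
  have hphases : φ₂ - φ₁ ≤ (ψB j - ψA i) + (τp A - σp A) + (σm B - τm B) := by
    linarith [hσ.top_le_of_mem hA hA0, hσ.le_bot_of_mem hB hB0,
      hpA ▸ hψA.antitone (Fin.zero_le i), hmB ▸ hψB.antitone (Fin.le_last j)]
  calc ((φ₂ - φ₁ : ℝ) : EReal)
      ≤ ((ψB j - ψA i : ℝ) : EReal) + ((τp A - σp A : ℝ) : EReal)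
          + ((σm B - τm B : ℝ) : EReal) := by exact_mod_cast hphases
    _ ≤ gldim D τ + d₁ + d₂ := add_le_add (add_le_add hfactors (htop A hA0)) (hbot B hB0)

end

/-- if `d(P,Q)` is the slicing distance between two stability conditions
`σ` and `τ`, namely the sup over nonzero `E` of
`max (|φ⁺_σ(E) − φ⁺_τ(E)|) (|φ⁻_σ(E) − φ⁻_τ(E)|)`, then
`|gldim σ − gldim τ| ≤ 2·d(P,Q)` in the extended reals, stated as the two one-sided
inequalities `gldim σ ≤ gldim τ + 2·d` and `gldim τ ≤ gldim σ + 2·d`. -/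
theorem gldim_lipschitz_slicing_distance (σ τ : StabilityCondition D)
    (σp σm τp τm : D → ℝ)
    (hσ : IsHNPhases D σ σp σm) (hτ : IsHNPhases D τ τp τm)
    (d : EReal)
    (hd : d = sSup { x : EReal | ∃ E : D, ¬ IsZero E ∧
      x = ((max |σp E - τp E| |σm E - τm E| : ℝ) : EReal) }) :
    gldim D σ ≤ gldim D τ + 2 * d ∧ gldim D τ ≤ gldim D σ + 2 * d := by
  have hdist : ∀ E : D, ¬ IsZero E → ∀ x : ℝ, x ≤ max |σp E - τp E| |σm E - τm E| →
      (x : EReal) ≤ d := fun E hE x hx =>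
    hd ▸ (EReal.coe_le_coe_iff.2 hx).trans (le_sSup ⟨E, hE, rfl⟩)
  rw [EReal.two_mul, ← add_assoc, ← add_assoc]
  refine ⟨gldim_le_gldim_add_add hσ hτ (fun E hE => hdist E hE _ ?_)
      (fun E hE => hdist E hE _ ?_),
    gldim_le_gldim_add_add hτ hσ (fun E hE => hdist E hE _ ?_) (fun E hE => hdist E hE _ ?_)⟩
  · exact le_max_of_le_left (abs_sub_comm (σp E) (τp E) ▸ le_abs_self _)
  · exact le_max_of_le_right (le_abs_self _)
  · exact le_max_of_le_left (le_abs_self _)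
  · exact le_max_of_le_right (abs_sub_comm (σm E) (τm E) ▸ le_abs_self _)
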